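/- arXiv:2101.11255 — 2 statements merged into one kernel-verified Lean document; each statement's English description precedes it below -/
import Mathlib

section
/- Let s ∈ [1/2, 2/3], set θ = (2s-1)/s, let r > s/(1-s), c ∈ ℝ, and let (P, N) be a nontrivial traveling wave of the gene-drive frequency system with speed c such that P is strictly increasing and (P(x), N(x)) → (1, (1/r)(r - s/(1-s))) as x → +∞. If r ≤ 4, 1 - ((1-s)·θ³/(2 - 3s + θ³))^(1/4) > 0, and r·(1 - ((1-s)·θ³/(2 - 3s + θ³))^(1/4)) ≥ s/(1-s), then c < 0. -/
/-!
Suppose `c ≥ 0` and write `f p = p (1 - p) (s p - (2s - 1))`. For `w = N² P'` the equation for `P`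
reads `w' = -c w - N² (r (1 - N) + 1) f(P)`, so `(w² / 2)' = -c w² - k f(P) P'` with
`k = N⁴ (r (1 - N) + 1)`. Since `r ≤ 4`, `t ↦ t⁴ (r (1 - t) + 1)` increases on `[0, 1]`, hence `k`
decreases from `1` to `m = N∞⁴ / (1 - s)` and `k f ≥ min f (m f)`. Integrating over `[a, b]`,
letting `b → ∞` and `a → -∞` along points where `P'` is small, gives `∫₀¹ min f (m f) < 0`, strictly
because `k > m`. With `θ = (2s - 1)/s` that integral equals `(m (2 - 3s + θ³) - θ³) / 12`, which the
hypothesis on `r` makes nonnegative.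
-/

open Set Filter Topology intervalIntegral

noncomputable def reaction (s p : ℝ) : ℝ := p * (1 - p) * (s * p - (2 * s - 1))

noncomputable def reactionAntideriv (s p : ℝ) : ℝ :=
  -(s * p ^ 4) / 4 + (3 * s - 1) * p ^ 3 / 3 - (2 * s - 1) * p ^ 2 / 2

noncomputable def energyWeight (r t : ℝ) : ℝ := t ^ 4 * (r * (1 - t) + 1)

section Reaction

variable {s p : ℝ}

lemma continuous_reaction : Continuous (reaction s) := by
  unfold reaction; fun_prop

lemma hasDerivAt_reactionAntideriv : HasDerivAt (reactionAntideriv s) (reaction s p) p := by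
  have e : reactionAntideriv s = fun q => -s / 4 * q ^ 4 + (3 * s - 1) / 3 * q ^ 3
      - (2 * s - 1) / 2 * q ^ 2 := by
    ext q; unfold reactionAntideriv; ring
  rw [e]
  refine ((((hasDerivAt_pow 4 p).const_mul _).add ((hasDerivAt_pow 3 p).const_mul _)).sub
    ((hasDerivAt_pow 2 p).const_mul _)).congr_deriv ?_
  unfold reaction; ring

lemma reaction_eq (hs : s ≠ 0) : reaction s p = s * (p * (1 - p) * (p - (2 * s - 1) / s)) := by
  unfold reaction; field_simp

lemma reaction_nonpos (hs : 0 < s) (hp0 : 0 ≤ p) (hp1 : p ≤ 1) (hp : p ≤ (2 * s - 1) / s) :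
    reaction s p ≤ 0 := by
  rw [reaction_eq hs.ne']
  exact mul_nonpos_of_nonneg_of_nonpos hs.le <|
    mul_nonpos_of_nonneg_of_nonpos (mul_nonneg hp0 (by linarith)) (by linarith)

lemma reaction_nonneg (hs0 : 1 / 2 ≤ s) (hp : (2 * s - 1) / s ≤ p) (hp1 : p ≤ 1) :
    0 ≤ reaction s p := by
  have hs : 0 < s := by linarith
  have hp0 : 0 ≤ p := le_trans (div_nonneg (by linarith) hs.le) hp
  rw [reaction_eq hs.ne']
  exact mul_nonneg hs.le (mul_nonneg (mul_nonneg hp0 (by linarith)) (by linarith))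

lemma reaction_pos (hs0 : 1 / 2 ≤ s) (hp : (2 * s - 1) / s < p) (hp1 : p < 1) :
    0 < reaction s p := by
  have hs : 0 < s := by linarith
  have hp0 : 0 < p := lt_of_le_of_lt (div_nonneg (by linarith) hs.le) hp
  rw [reaction_eq hs.ne']
  exact mul_pos hs (mul_pos (mul_pos hp0 (by linarith)) (by linarith))

/-- With `θ = (2s - 1)/s` the zero of the reaction in `[0, 1)`, this is `∫₀^θ f + m ∫_θ^1 f`. -/
lemma integral_min_reaction {m : ℝ} (hs0 : 1 / 2 ≤ s) (hs1 : s < 1) (hm : m ≤ 1) :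
    ∫ p in (0 : ℝ)..1, min (reaction s p) (m * reaction s p)
      = (m * (2 - 3 * s + ((2 * s - 1) / s) ^ 3) - ((2 * s - 1) / s) ^ 3) / 12 := by
  have hs : 0 < s := by linarith
  set θ := (2 * s - 1) / s with hθ
  have hsθ : s * θ = 2 * s - 1 := by rw [hθ]; field_simp
  clear_value θ
  have hθ0 : 0 ≤ θ := by rw [hθ]; exact div_nonneg (by linarith) hs.le
  have hθ1 : θ ≤ 1 := by rw [hθ]; exact (div_le_one hs).2 (by linarith)
  have hcont : Continuous fun p => min (reaction s p) (m * reaction s p) := by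
    have := continuous_reaction (s := s); fun_prop
  rw [← integral_add_adjacent_intervals (b := θ) (hcont.intervalIntegrable _ _)
    (hcont.intervalIntegrable _ _)]
  have hleft : ∫ p in (0 : ℝ)..θ, min (reaction s p) (m * reaction s p)
      = ∫ p in (0 : ℝ)..θ, reaction s p := by
    refine integral_congr fun p hp => min_eq_left ?_
    rw [uIcc_of_le hθ0] at hp
    nlinarith [reaction_nonpos hs hp.1 (hp.2.trans hθ1) (hp.2.trans_eq hθ)]
  have hright : ∫ p in θ..1, min (reaction s p) (m * reaction s p)
      = m * ∫ p in θ..1, reaction s p := by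
    rw [← integral_const_mul]
    refine integral_congr fun p hp => min_eq_right ?_
    rw [uIcc_of_le hθ1] at hp
    nlinarith [reaction_nonneg hs0 (hθ.symm.trans_le hp.1) hp.2]
  have hFTC : ∀ u v, ∫ p in u..v, reaction s p = reactionAntideriv s v - reactionAntideriv s u :=
    fun u v => integral_eq_sub_of_hasDerivAt (fun _ _ => hasDerivAt_reactionAntideriv)
      (continuous_reaction.intervalIntegrable u v)
  rw [hleft, hright, hFTC, hFTC]
  unfold reactionAntideriv
  linear_combination ((m - 1) * θ ^ 3 / 4 + (1 - m) * θ ^ 2 / 2) * hsθ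

end Reaction

section EnergyWeight

variable {r t : ℝ}

lemma energyWeight_one : energyWeight r 1 = 1 := by
  simp [energyWeight]

lemma strictMonoOn_energyWeight (hr0 : 0 ≤ r) (hr4 : r ≤ 4) :
    StrictMonoOn (energyWeight r) (Icc 0 1) := by
  refine strictMonoOn_of_deriv_pos (convex_Icc 0 1) (by unfold energyWeight; fun_prop) ?_
  intro x hx
  rw [interior_Icc] at hx
  have e : energyWeight r = fun t => (1 + r) * t ^ 4 - r * t ^ 5 := by
    ext t; unfold energyWeight; ring
  have hD : HasDerivAt (energyWeight r) (x ^ 3 * (4 * (1 + r) - 5 * r * x)) x := by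
    rw [e]
    refine (((hasDerivAt_pow 4 x).const_mul _).sub
      ((hasDerivAt_pow 5 x).const_mul _)).congr_deriv ?_
    push_cast; ring
  rw [hD.deriv]
  have : 0 < 4 * (1 + r) - 5 * r * x := by nlinarith [hx.1, hx.2]
  exact mul_pos (pow_pos hx.1 3) this

lemma energyWeight_le_one (hr0 : 0 ≤ r) (hr4 : r ≤ 4) (ht0 : 0 ≤ t) (ht1 : t ≤ 1) :
    energyWeight r t ≤ 1 :=
  ((strictMonoOn_energyWeight hr0 hr4).monotoneOn ⟨ht0, ht1⟩ ⟨zero_le_one, le_rfl⟩ ht1).trans_eq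
    energyWeight_one

end EnergyWeight

lemma hasDerivAt_sq_mul_deriv {P N : ℝ → ℝ} {c G x : ℝ} (hP : DifferentiableAt ℝ (deriv P) x)
    (hN : DifferentiableAt ℝ N x) (hN0 : N x ≠ 0)
    (heq : -deriv (deriv P) x - c * deriv P x - 2 * (deriv N x / N x) * deriv P x = G) :
    HasDerivAt (fun y => N y ^ 2 * deriv P y) (-c * (N x ^ 2 * deriv P x) - N x ^ 2 * G) x := by
  refine ((hN.hasDerivAt.pow 2).mul hP.hasDerivAt).congr_deriv ?_
  rw [← heq]
  simp only [Pi.pow_apply]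
  field_simp
  ring

/-- Integrate `(w² / 2)' = -c w² - w G` and drop the damping term `-c w²`. -/
lemma integral_mul_le_sq_div_two {w G : ℝ → ℝ} {c a b : ℝ} (hc : 0 ≤ c) (hab : a ≤ b)
    (hw : ∀ x, HasDerivAt w (-c * w x - G x) x) (hG : Continuous G) :
    ∫ x in a..b, w x * G x ≤ w a ^ 2 / 2 := by
  have hwc : Continuous w := continuous_iff_continuousAt.2 fun x => (hw x).continuousAt
  have hFTC : ∫ x in a..b, (-c * w x ^ 2 - w x * G x) = w b ^ 2 / 2 - w a ^ 2 / 2 :=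
    integral_eq_sub_of_hasDerivAt
      (fun x _ => (((hw x).pow 2).div_const 2).congr_deriv (by push_cast; ring))
      (Continuous.intervalIntegrable (by fun_prop) a b)
  rw [integral_sub ((by fun_prop : Continuous fun x => -c * w x ^ 2).intervalIntegrable a b)
    ((by fun_prop : Continuous fun x => w x * G x).intervalIntegrable a b),
    integral_const_mul] at hFTC
  have hsq : 0 ≤ ∫ x in a..b, w x ^ 2 := integral_nonneg hab fun x _ => sq_nonneg (w x)
  nlinarith [mul_nonneg hc hsq, sq_nonneg (w b)]

lemma integral_energyWeight_mul_le {f P N : ℝ → ℝ} {r c a b : ℝ} (hf : Continuous f)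
    (hc : 0 ≤ c) (hab : a ≤ b) (hP2 : ContDiff ℝ 2 P) (hNd : Differentiable ℝ N)
    (hNpos : ∀ x, 0 < N x) (hNa : N a ≤ 1)
    (heqP : ∀ x, -deriv (deriv P) x - c * deriv P x - 2 * (deriv N x / N x) * deriv P x
      = (r * (1 - N x) + 1) * f (P x)) :
    ∫ x in a..b, energyWeight r (N x) * f (P x) * deriv P x ≤ deriv P a ^ 2 / 2 := by
  have hPd2 : Differentiable ℝ (deriv P) :=
    (contDiff_succ_iff_deriv.1 hP2).2.2.differentiable one_ne_zero
  have hG : Continuous fun x => N x ^ 2 * ((r * (1 - N x) + 1) * f (P x)) := by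
    have := hNd.continuous; have := hP2.continuous; fun_prop
  have hNa4 : N a ^ 4 ≤ 1 := pow_le_one₀ (hNpos a).le hNa
  calc ∫ x in a..b, energyWeight r (N x) * f (P x) * deriv P x
      = ∫ x in a..b, N x ^ 2 * deriv P x * (N x ^ 2 * ((r * (1 - N x) + 1) * f (P x))) :=
        integral_congr fun x _ => by unfold energyWeight; ring
    _ ≤ (N a ^ 2 * deriv P a) ^ 2 / 2 := integral_mul_le_sq_div_two hc hab
        (fun x => hasDerivAt_sq_mul_deriv (hPd2 x) (hNd x) (hNpos x).ne' (heqP x)) hG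
    _ ≤ deriv P a ^ 2 / 2 := by nlinarith [sq_nonneg (deriv P a)]

lemma min_le_mul_of_le_of_le_one {m k y : ℝ} (hmk : m ≤ k) (hk : k ≤ 1) :
    min y (m * y) ≤ k * y := by
  rcases le_total 0 y with hy | hy
  · exact (min_le_right _ _).trans (mul_le_mul_of_nonneg_right hmk hy)
  · exact (min_le_left _ _).trans (by nlinarith)

/-- The second term on the left is the gain from `k ≥ k x₂` on `[x₁, x₂]`, where `f ∘ P ≥ 0`. -/
lemma integral_min_add_le_integral {f k P : ℝ → ℝ} {m a x₁ x₂ b : ℝ} (hf : Continuous f)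
    (hP : ContDiff ℝ 1 P) (hPmono : Monotone P) (hk : Continuous k) (hk_anti : Antitone k)
    (hmk : ∀ x, m ≤ k x) (hk1 : ∀ x, k x ≤ 1) (hf₁₂ : ∀ x ∈ Icc x₁ x₂, 0 ≤ f (P x))
    (ha : a ≤ x₁) (h₁₂ : x₁ ≤ x₂) (hb : x₂ ≤ b) :
    (∫ p in P a..P b, min (f p) (m * f p)) + (k x₂ - m) * ∫ p in P x₁..P x₂, f p
      ≤ ∫ x in a..b, k x * f (P x) * deriv P x := by
  have hP' : Continuous (deriv P) := hP.continuous_deriv le_rfl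
  have hPd : ∀ x, HasDerivAt P (deriv P x) x := fun x =>
    (hP.differentiable one_ne_zero x).hasDerivAt
  have hP'0 : ∀ x, 0 ≤ deriv P x := fun x => hPmono.deriv_nonneg
  have hsubst : ∀ {g : ℝ → ℝ}, Continuous g → ∀ u v,
      ∫ x in u..v, g (P x) * deriv P x = ∫ p in P u..P v, g p :=
    fun hg u v => integral_comp_mul_deriv (fun x _ => hPd x) hP'.continuousOn hg
  set h : ℝ → ℝ := fun p => min (f p) (m * f p)
  have hh : Continuous h := by fun_prop
  set D : ℝ → ℝ := fun x => k x * f (P x) * deriv P x - h (P x) * deriv P x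
  have hPc : Continuous P := hP.continuous
  have hDc : Continuous D := by fun_prop
  have hD0 : ∀ x, 0 ≤ D x := fun x => sub_nonneg.2 <|
    mul_le_mul_of_nonneg_right (min_le_mul_of_le_of_le_one (hmk x) (hk1 x)) (hP'0 x)
  have hgain : (k x₂ - m) * ∫ p in P x₁..P x₂, f p ≤ ∫ x in x₁..x₂, D x := by
    rw [← hsubst hf, ← integral_const_mul]
    refine integral_mono_on h₁₂ (Continuous.intervalIntegrable (by fun_prop) _ _)
      (hDc.intervalIntegrable _ _) fun x hx => ?_
    have hhm : h (P x) ≤ m * f (P x) := min_le_right _ _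
    have hfP := mul_nonneg (hf₁₂ x hx) (hP'0 x)
    nlinarith [hk_anti hx.2, mul_le_mul_of_nonneg_right hhm (hP'0 x)]
  have hmono : ∫ x in x₁..x₂, D x ≤ ∫ x in a..b, D x :=
    integral_mono_interval ha h₁₂ hb (Eventually.of_forall hD0) (hDc.intervalIntegrable a b)
  have hsplit : ∫ x in a..b, k x * f (P x) * deriv P x
      = (∫ x in a..b, h (P x) * deriv P x) + ∫ x in a..b, D x := by
    rw [← integral_add (Continuous.intervalIntegrable (by fun_prop) _ _)
      (hDc.intervalIntegrable _ _)]
    simp only [D, add_sub_cancel]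
  rw [hsplit, hsubst hh]
  linarith

lemma frequently_abs_deriv_lt_of_tendsto_atBot {f : ℝ → ℝ} {L ε : ℝ} (hf : Differentiable ℝ f)
    (hL : Tendsto f atBot (𝓝 L)) (hε : 0 < ε) : ∃ᶠ x in atBot, |deriv f x| < ε := by
  rw [frequently_atBot]
  intro a
  obtain ⟨y₀, hy₀⟩ := eventually_atBot.1 (hL.eventually (Metric.ball_mem_nhds L (half_pos hε)))
  set y := min a y₀
  obtain ⟨x, hx, hslope⟩ := exists_hasDerivAt_eq_slope f (deriv f) (sub_one_lt y)
    hf.continuous.continuousOn fun x _ => (hf x).hasDerivAt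
  refine ⟨x, hx.2.le.trans (min_le_left _ _), ?_⟩
  have h₁ := hy₀ y (min_le_right _ _)
  have h₂ := hy₀ (y - 1) (by linarith [min_le_right a y₀])
  rw [Real.dist_eq, abs_lt] at h₁ h₂
  rw [hslope, sub_sub_cancel, div_one, abs_lt]
  constructor <;> linarith

/-- Let `b → ∞`, then `a → -∞` along points where `E a` is small. -/
lemma add_integral_nonpos_of_forall_le {h P E : ℝ → ℝ} {κ x₁ x₂ : ℝ} (hh : Continuous h)
    (hP0 : Tendsto P atBot (𝓝 0)) (hP1 : Tendsto P atTop (𝓝 1))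
    (hE : ∀ ε > 0, ∃ᶠ a in atBot, E a < ε)
    (hbound : ∀ a ≤ x₁, ∀ b ≥ x₂, κ + ∫ p in P a..P b, h p ≤ E a) :
    κ + ∫ p in (0 : ℝ)..1, h p ≤ 0 := by
  set H : ℝ → ℝ := fun u => ∫ p in (0 : ℝ)..u, h p
  have hHc : Continuous H :=
    continuous_iff_continuousAt.2 fun u =>
      (hh.integral_hasStrictDerivAt 0 u).hasDerivAt.continuousAt
  have hdiff : ∀ u v, ∫ p in u..v, h p = H v - H u := fun u v =>
    (integral_interval_sub_left (hh.intervalIntegrable _ _) (hh.intervalIntegrable _ _)).symm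
  have hH0 : H 0 = 0 := integral_same
  have hbound' : ∀ a ≤ x₁, κ + (H 1 - H (P a)) ≤ E a := fun a ha =>
    le_of_tendsto (((hHc.tendsto 1).comp hP1).sub_const (H (P a)) |>.const_add κ)
      ((eventually_ge_atTop x₂).mono fun b hb => by simpa [hdiff] using hbound a ha b hb)
  by_contra! hpos
  set δ := κ + H 1
  have hδ : 0 < δ := by simpa [δ, hdiff, hH0] using hpos
  have hsmall : ∀ᶠ a in atBot, H (P a) < δ / 2 ∧ a ≤ x₁ := by
    refine (((hHc.tendsto 0).comp hP0).eventually (gt_mem_nhds ?_)).and (eventually_le_atBot x₁)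
    rw [hH0]; exact half_pos hδ
  obtain ⟨a, hEa, hHa, ha⟩ := ((hE (δ / 2) (half_pos hδ)).and_eventually hsmall).exists
  linarith [hbound' a ha]

theorem integral_min_neg_of_speed_nonneg {f P N : ℝ → ℝ} {r c Ninf p₀ : ℝ}
    (hf : Continuous f) (hp₀ : p₀ < 1) (hfpos : ∀ p ∈ Ioo p₀ 1, 0 < f p)
    (hr0 : 0 ≤ r) (hr4 : r ≤ 4) (hc : 0 ≤ c)
    (hP2 : ContDiff ℝ 2 P) (hNd : Differentiable ℝ N) (hNpos : ∀ x, 0 < N x)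
    (hPmono : StrictMono P) (hNanti : StrictAnti N)
    (hPlim : Tendsto P atBot (𝓝 0)) (hNlim : Tendsto N atBot (𝓝 1))
    (hPlim' : Tendsto P atTop (𝓝 1)) (hNlim' : Tendsto N atTop (𝓝 Ninf))
    (heqP : ∀ x, -deriv (deriv P) x - c * deriv P x - 2 * (deriv N x / N x) * deriv P x
      = (r * (1 - N x) + 1) * f (P x)) :
    ∫ p in (0 : ℝ)..1, min (f p) (energyWeight r Ninf * f p) < 0 := by
  have hPd : Differentiable ℝ P := hP2.differentiable two_ne_zero
  set m := energyWeight r Ninf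
  set k : ℝ → ℝ := fun x => energyWeight r (N x)
  have hN1 : ∀ x, N x ≤ 1 := hNanti.antitone.ge_of_tendsto hNlim
  have hNinf : ∀ x, Ninf ≤ N x := hNanti.antitone.le_of_tendsto hNlim'
  have hNmem : ∀ x, N x ∈ Icc (0 : ℝ) 1 := fun x => ⟨(hNpos x).le, hN1 x⟩
  have hNinfmem : Ninf ∈ Icc (0 : ℝ) 1 :=
    ⟨ge_of_tendsto' hNlim' fun x => (hNpos x).le, (hNinf 0).trans (hN1 0)⟩
  have hφ := strictMonoOn_energyWeight hr0 hr4
  have hk : Continuous k := by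
    have := hNd.continuous; simp only [k, energyWeight]; fun_prop
  have hk_anti : Antitone k := fun x y hxy =>
    hφ.monotoneOn (hNmem y) (hNmem x) (hNanti.antitone hxy)
  have hmk : ∀ x, m ≤ k x := fun x => hφ.monotoneOn hNinfmem (hNmem x) (hNinf x)
  have hk1 : ∀ x, k x ≤ 1 := fun x => energyWeight_le_one hr0 hr4 (hNmem x).1 (hN1 x)
  obtain ⟨x₁, hx₁⟩ := (hPlim'.eventually (lt_mem_nhds hp₀)).exists
  have hP1 : ∀ x, P x < 1 := fun x =>
    (hPmono (lt_add_one x)).trans_le (hPmono.monotone.ge_of_tendsto hPlim' _)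
  have hfx : ∀ x ∈ Icc x₁ (x₁ + 1), 0 ≤ f (P x) := fun x hx =>
    (hfpos _ ⟨hx₁.trans_le (hPmono.monotone hx.1), hP1 x⟩).le
  have hκ : 0 < (k (x₁ + 1) - m) * ∫ p in P x₁..P (x₁ + 1), f p := by
    refine mul_pos (sub_pos.2 ?_) (intervalIntegral_pos_of_pos_on (hf.intervalIntegrable _ _)
      (fun p hp => hfpos p ⟨hx₁.trans hp.1, hp.2.trans (hP1 _)⟩) (hPmono (lt_add_one x₁)))
    exact hφ hNinfmem (hNmem _) ((hNinf _).trans_lt (hNanti (lt_add_one (x₁ + 1))))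
  have hsmall : ∀ ε > 0, ∃ᶠ a in atBot, deriv P a ^ 2 / 2 < ε := fun ε hε =>
    (frequently_abs_deriv_lt_of_tendsto_atBot hPd hPlim (lt_min one_pos hε)).mono fun a ha => by
      have := lt_min_iff.1 ha
      nlinarith [sq_abs (deriv P a), abs_nonneg (deriv P a)]
  have := add_integral_nonpos_of_forall_le (h := fun p => min (f p) (m * f p))
    (κ := (k (x₁ + 1) - m) * ∫ p in P x₁..P (x₁ + 1), f p) (by fun_prop) hPlim hPlim' hsmall
    fun a ha b hb => by
    have := integral_min_add_le_integral hf (hP2.of_le one_le_two) hPmono.monotone hk hk_anti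
      hmk hk1 hfx ha (by linarith) hb
    linarith [integral_energyWeight_mul_le hf hc (by linarith : a ≤ b) hP2 hNd hNpos (hN1 a) heqP]
  linarith

lemma le_pow_four_of_rpow_le {x y : ℝ} (hx : 0 ≤ x) (h : x ^ ((1 : ℝ) / 4) ≤ y) : x ≤ y ^ 4 := by
  have := pow_le_pow_left₀ (Real.rpow_nonneg hx _) h 4
  rwa [one_div, show (4 : ℝ) = (4 : ℕ) by norm_num, Real.rpow_inv_natCast_pow hx (by norm_num)]
    at this

lemma pow_three_le_energyWeight_mul {s r : ℝ} (hs0 : 1 / 2 ≤ s) (hs : s ≤ 2 / 3)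
    (hr : s / (1 - s) < r)
    (hineq : s / (1 - s) ≤ r * (1 - ((1 - s) * ((2 * s - 1) / s) ^ 3
        / (2 - 3 * s + ((2 * s - 1) / s) ^ 3)) ^ ((1 : ℝ) / 4))) :
    ((2 * s - 1) / s) ^ 3
      ≤ energyWeight r (1 / r * (r - s / (1 - s))) * (2 - 3 * s + ((2 * s - 1) / s) ^ 3) := by
  have hs1 : 0 < 1 - s := by linarith
  have hr0 : 0 < r := (div_pos (by linarith) hs1).trans hr
  set θ := (2 * s - 1) / s
  set Ninf := 1 / r * (r - s / (1 - s))
  have hθ0 : 0 ≤ θ := div_nonneg (by linarith) (by linarith)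
  have hθ_ge : 2 * s - 1 ≤ θ := (le_div_iff₀ (by linarith)).2 (by nlinarith)
  have hden : 0 < 2 - 3 * s + θ ^ 3 := by
    nlinarith [pow_le_pow_left₀ (by linarith) hθ_ge 3, mul_nonneg (sub_nonneg.2 hs) (sub_nonneg.2 hs0),
      mul_nonneg (mul_nonneg (sub_nonneg.2 hs) (sub_nonneg.2 hs)) (sub_nonneg.2 hs0)]
  have hweight : energyWeight r Ninf = Ninf ^ 4 / (1 - s) := by
    unfold energyWeight Ninf; field_simp; ring
  have hA : (1 - s) * θ ^ 3 / (2 - 3 * s + θ ^ 3) ≤ Ninf ^ 4 := by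
    refine le_pow_four_of_rpow_le (by positivity) ?_
    rw [show Ninf = 1 - s / (1 - s) / r by unfold Ninf; field_simp, le_sub_comm,
      div_le_iff₀ hr0]
    linarith
  rw [div_le_iff₀ hden] at hA
  rw [hweight, div_mul_eq_mul_div, le_div_iff₀ hs1]
  linarith

theorem stmt8_general
    (s r c : ℝ) (hs0 : 1 / 2 ≤ s) (hs : s ≤ 2 / 3)
    (hr : s / (1 - s) < r)
    (P N : ℝ → ℝ)
    (hP2 : ContDiff ℝ 2 P) (hN2 : ContDiff ℝ 2 N)
    (hNpos : ∀ x, 0 < N x)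
    (hPmono : StrictMono P) (hNanti : StrictAnti N)
    (hPlim : Filter.Tendsto P Filter.atBot (nhds 0))
    (hNlim : Filter.Tendsto N Filter.atBot (nhds 1))
    (hPlim' : Filter.Tendsto P Filter.atTop (nhds 1))
    (hNlim' : Filter.Tendsto N Filter.atTop (nhds ((1 / r) * (r - s / (1 - s)))))
    (heqP : ∀ x, -deriv (deriv P) x - c * deriv P x - 2 * (deriv N x / N x) * deriv P x
      = (r * (1 - N x) + 1) * P x * (1 - P x) * (s * P x - (2 * s - 1)))
    (hr4 : r ≤ 4)
    (hineq : s / (1 - s) ≤ r * (1 - ((1 - s) * ((2 * s - 1) / s) ^ 3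
        / (2 - 3 * s + ((2 * s - 1) / s) ^ 3)) ^ ((1 : ℝ) / 4))) :
    c < 0 := by
  by_contra! hc
  have hs1 : s < 1 := by linarith
  have hr0 : 0 < r := (div_pos (by linarith) (by linarith)).trans hr
  have hNinf : 1 / r * (r - s / (1 - s)) ≤ 1 := by
    rw [one_div_mul_eq_div, div_le_one hr0]
    linarith [div_pos (by linarith : 0 < s) (by linarith : 0 < 1 - s)]
  have hneg := integral_min_neg_of_speed_nonneg continuous_reaction
    ((div_lt_one (by linarith)).2 (by linarith)) (fun p hp => reaction_pos hs0 hp.1 hp.2)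
    hr0.le hr4 hc hP2 (hN2.differentiable two_ne_zero) hNpos hPmono hNanti hPlim hNlim hPlim'
    hNlim' fun x => (heqP x).trans (by unfold reaction; ring)
  rw [integral_min_reaction hs0 hs1
    (energyWeight_le_one hr0.le hr4 (mul_nonneg (by positivity) (by linarith)) hNinf)] at hneg
  linarith [pow_three_le_energyWeight_mul hs0 hs hr hineq]

/-- For `s ∈ [1/2, 2/3]`, `θ = (2s-1)/s`, `r > s/(1-s)`, and a nontrivial
traveling wave of the gene-drive frequency system with strictly increasing `P`
converging at `+∞` to `(1, (1/r)(r - s/(1-s)))`: if `r ≤ 4`,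
`1 - ((1-s)θ³/(2-3s+θ³))^(1/4) > 0` and `r (1 - ((1-s)θ³/(2-3s+θ³))^(1/4)) ≥ s/(1-s)`,
then `c < 0`. -/
theorem stmt8
    (s r c : ℝ) (hs0 : 1 / 2 ≤ s) (hs : s ≤ 2 / 3)
    (hr0 : 0 < r) (hr : s / (1 - s) < r)
    (P N : ℝ → ℝ)
    (hP2 : ContDiff ℝ 2 P) (hN2 : ContDiff ℝ 2 N)
    (hNpos : ∀ x, 0 < N x)
    (hPbd : Bornology.IsBounded (Set.range P))
    (hNbd : Bornology.IsBounded (Set.range N))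
    (hPnn : ∀ x, 0 ≤ P x)
    (hPmono : StrictMono P) (hNanti : StrictAnti N)
    (hPlim : Filter.Tendsto P Filter.atBot (nhds 0))
    (hNlim : Filter.Tendsto N Filter.atBot (nhds 1))
    (hPlim' : Filter.Tendsto P Filter.atTop (nhds 1))
    (hNlim' : Filter.Tendsto N Filter.atTop (nhds ((1 / r) * (r - s / (1 - s)))))
    (heqP : ∀ x, -deriv (deriv P) x - c * deriv P x - 2 * (deriv N x / N x) * deriv P x
      = (r * (1 - N x) + 1) * P x * (1 - P x) * (s * P x - (2 * s - 1)))
    (heqN : ∀ x, -deriv (deriv N) x - c * deriv N x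
      = N x * ((1 - s + s * (1 - P x) ^ 2) * (r * (1 - N x) + 1) - 1))
    (hnontriv : ∃ x, P x ≠ 0)
    (hr4 : r ≤ 4)
    (hpos : 0 < 1 - ((1 - s) * ((2 * s - 1) / s) ^ 3
        / (2 - 3 * s + ((2 * s - 1) / s) ^ 3)) ^ ((1 : ℝ) / 4))
    (hineq : s / (1 - s) ≤ r * (1 - ((1 - s) * ((2 * s - 1) / s) ^ 3
        / (2 - 3 * s + ((2 * s - 1) / s) ^ 3)) ^ ((1 : ℝ) / 4))) :
    c < 0 :=
  stmt8_general s r c hs0 hs hr P N hP2 hN2 hNpos hPmono hNanti hPlim hNlim hPlim' hNlim' heqP hr4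
    hineq
end

section
/- Let s ∈ [0, 1/2], r > 0, c ∈ ℝ, and let (P, N) be a nontrivial traveling wave of the gene-drive frequency system with speed c such that P is strictly increasing and P converges exponentially fast to 0 at -∞ (i.e., there exist λ > 0 and C > 0 with P(x) ≤ C·e^{λx} for all x ≤ 0). Then P(x) → 1 as x → +∞, c < 0, and moreover c ≤ -2√(1-2s). -/
/-!
Write `F` for the reaction term of the `P`-equation and `Q = N² P'`. The `P`-equation reads
`Q' = -c Q - N² F` and `0 ≤ Q ≤ P'`. If `c ≥ 0`, then `Q` is nonincreasing on the region `P < 1`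
near `-∞`, so `P'` stays above a positive constant there, contradicting `P → 0`. In the same way
`P ≤ 1`: beyond a point where `P > 1` the flux `Q` is nondecreasing and `P` would be unbounded.

`ψ = -N'/N` solves `ψ' = ψ² - c ψ + g` with `g ≥ -1`, so it is bounded above, since otherwise it
blows up in finite time. If `P → M < 1`, then `P'' = (2ψ - c) P' - F` with `F` bounded below by a
positive constant on `[0, ∞)`, which keeps `P'` above a positive constant and makes `P` unbounded.

Finally `N² F / P → 1 - 2s` at `-∞`, so if `c² < 4 (1 - 2s)` the function `φ = Q / P + c / 2`
satisfies a Riccati inequality `φ' ≤ -(φ² + k)` with `k > 0` near `-∞`; comparing `arctan φ` with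
a linear function shows this is impossible.
-/

open Filter Set Topology

theorem tendsto_atTop_of_le_deriv {f : ℝ → ℝ} {a m : ℝ} (hf : Differentiable ℝ f) (hm : 0 < m)
    (h : ∀ x, a ≤ x → m ≤ deriv f x) : Tendsto f atTop atTop := by
  have hlin : ∀ x, a ≤ x → f a + m * (x - a) ≤ f x := fun x hx => by
    have := (convex_Ici a).mul_sub_le_image_sub_of_le_deriv hf.continuous.continuousOn
      hf.differentiableOn (fun y hy => h y (interior_subset hy : y ∈ Ici a)) a self_mem_Ici x hx hx
    linarith
  refine tendsto_atTop_mono' _ (eventually_atTop.mpr ⟨a, hlin⟩) ?_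
  exact tendsto_atTop_add_const_left _ _
    ((tendsto_atTop_add_const_right _ (-a) tendsto_id).const_mul_atTop hm)

theorem tendsto_atBot_of_le_deriv {f : ℝ → ℝ} {a m : ℝ} (hf : Differentiable ℝ f) (hm : 0 < m)
    (h : ∀ x, x ≤ a → m ≤ deriv f x) : Tendsto f atBot atBot := by
  have hlin : ∀ x, x ≤ a → f x ≤ f a - m * (a - x) := fun x hx => by
    have := (convex_Iic a).mul_sub_le_image_sub_of_le_deriv hf.continuous.continuousOn
      hf.differentiableOn (fun y hy => h y (interior_subset hy : y ∈ Iic a)) x hx a self_mem_Iic hx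
    linarith
  refine tendsto_atBot_mono' _ (eventually_atBot.mpr ⟨a, hlin⟩) ?_
  exact tendsto_atBot_add_const_left _ _
    (tendsto_neg_atTop_atBot.comp
      ((tendsto_atTop_add_const_left _ a tendsto_neg_atBot_atTop).const_mul_atTop hm))

theorem not_forall_mul_sq_add_one_le_deriv {f : ℝ → ℝ} {a ε : ℝ} (hf : Differentiable ℝ f)
    (hε : 0 < ε) : ¬ ∀ x, a ≤ x → ε * (f x ^ 2 + 1) ≤ deriv f x := by
  intro h
  have hderiv : ∀ x, a ≤ x → ε ≤ deriv (fun y => Real.arctan (f y)) x := fun x hx => by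
    rw [(hf x).hasDerivAt.arctan.deriv, one_div_mul_eq_div, le_div_iff₀ (by positivity)]
    linarith [h x hx]
  obtain ⟨x, hx⟩ := ((tendsto_atTop_of_le_deriv hf.arctan hε hderiv).eventually_gt_atTop
    (Real.pi / 2)).exists
  exact (Real.arctan_lt_pi_div_two _).not_gt hx

theorem not_forall_deriv_le_neg_mul_sq_add_one {f : ℝ → ℝ} {a ε : ℝ} (hf : Differentiable ℝ f)
    (hε : 0 < ε) : ¬ ∀ x, x ≤ a → deriv f x ≤ -(ε * (f x ^ 2 + 1)) := by
  intro h
  have hderiv : ∀ x, x ≤ a → ε ≤ deriv (fun y => Real.arctan (-f y)) x := fun x hx => by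
    rw [(hf x).hasDerivAt.fun_neg.arctan.deriv, one_div_mul_eq_div, le_div_iff₀ (by positivity)]
    linarith [h x hx]
  obtain ⟨x, hx⟩ := ((tendsto_atBot_of_le_deriv (hf.fun_neg).arctan hε hderiv).eventually_lt_atBot
    (-(Real.pi / 2))).exists
  exact (Real.neg_pi_div_two_lt_arctan _).not_gt hx

theorem le_of_deriv_neg_of_eq {f : ℝ → ℝ} {a K : ℝ} (hf : Differentiable ℝ f) (ha : f a ≤ K)
    (h : ∀ x, a ≤ x → f x = K → deriv f x < 0) {x : ℝ} (hx : a ≤ x) : f x ≤ K :=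
  image_le_of_deriv_right_lt_deriv_boundary' (B := fun _ => K) (B' := 0)
    hf.continuous.continuousOn (fun y _ => (hf y).hasDerivAt.hasDerivWithinAt) ha
    continuousOn_const (fun _ _ => hasDerivWithinAt_const _ _ _) (fun y hy => h y hy.1)
    ⟨hx, le_rfl⟩

theorem le_of_deriv_pos_of_eq {f : ℝ → ℝ} {a K : ℝ} (hf : Differentiable ℝ f) (ha : K ≤ f a)
    (h : ∀ x, a ≤ x → f x = K → 0 < deriv f x) {x : ℝ} (hx : a ≤ x) : K ≤ f x :=
  image_le_of_deriv_right_lt_deriv_boundary' (f := fun _ => K) (f' := 0)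
    continuousOn_const (fun _ _ => hasDerivWithinAt_const _ _ _) ha
    hf.continuous.continuousOn (fun y _ => (hf y).hasDerivAt.hasDerivWithinAt)
    (fun y hy hyK => h y hy.1 hyK.symm) ⟨hx, le_rfl⟩

theorem bddAbove_of_sq_sub_le_deriv {f : ℝ → ℝ} {b G : ℝ} (hf : Differentiable ℝ f)
    (h : ∀ x, f x ^ 2 - b * f x - G ≤ deriv f x) : BddAbove (range f) := by
  set K := 2 * |b| + 2 * |G| + 2
  have hquad : ∀ y, K ≤ y → (y ^ 2 + 1) / 2 ≤ y ^ 2 - b * y - G := fun y hy => by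
    nlinarith [le_abs_self b, le_abs_self G, abs_nonneg b, abs_nonneg G]
  refine ⟨K, ?_⟩
  rintro _ ⟨x₀, rfl⟩
  by_contra! hx₀
  have hstay : ∀ x, x₀ ≤ x → K ≤ f x := fun x hx =>
    le_of_deriv_pos_of_eq hf hx₀.le (fun y _ hy => by
      linarith [h y, hquad (f y) hy.ge, sq_nonneg (f y)]) hx
  exact not_forall_mul_sq_add_one_le_deriv hf one_half_pos
    fun x hx => by linarith [h x, hquad _ (hstay x hx)]

theorem lt_of_deriv_le_mul_sub {u : ℝ → ℝ} {a K β : ℝ} (hu : Differentiable ℝ u) (hK : 0 < K)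
    (hβ : 0 < β) (hnn : ∀ x, a ≤ x → 0 ≤ u x) (h : ∀ x, a ≤ x → deriv u x ≤ K * u x - β)
    {x : ℝ} (hx : a ≤ x) : β / (2 * K) < u x := by
  by_contra! hle
  have hKτ : K * (β / (2 * K)) = β / 2 := by field_simp
  have hstay : ∀ y, x ≤ y → u y ≤ β / (2 * K) := fun y hy =>
    le_of_deriv_neg_of_eq hu hle (fun z hz hzτ => by
      have := h z (hx.trans hz)
      rw [hzτ, hKτ] at this
      linarith) hy
  have hdecay : Tendsto (fun y => -u y) atTop atTop :=
    tendsto_atTop_of_le_deriv hu.neg (half_pos hβ) fun y hy => by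
      rw [deriv.fun_neg]
      nlinarith [h y (hx.trans hy), hstay y hy]
  obtain ⟨y, hy, hya⟩ := ((hdecay.eventually_gt_atTop 0).and (eventually_ge_atTop x)).exists
  linarith [hnn y (hx.trans hya)]

def driveReaction (s r p n : ℝ) : ℝ :=
  (r * (1 - n) + 1) * p * (1 - p) * (s * p - (2 * s - 1))

section driveReaction

variable {s r p n : ℝ}

theorem driveReaction_eq :
    driveReaction s r p n = (r * (1 - n) + 1) * (p * (1 - p) * (s * p + (1 - 2 * s))) := by
  unfold driveReaction; ring

theorem driveReaction_nonpos (hs0 : 0 ≤ s) (hs : s ≤ 1 / 2) (hr : 0 ≤ r) (hn : n ≤ 1)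
    (hp : 1 ≤ p) : driveReaction s r p n ≤ 0 := by
  rw [driveReaction_eq]
  exact mul_nonpos_of_nonneg_of_nonpos (by nlinarith)
    (mul_nonpos_of_nonpos_of_nonneg (by nlinarith) (by nlinarith))

theorem mul_le_driveReaction (hs0 : 0 ≤ s) (hs : s ≤ 1 / 2) (hr : 0 ≤ r) (hn : n ≤ 1)
    (hp0 : 0 ≤ p) (hp1 : p ≤ 1) : (1 - 2 * s) * (p * (1 - p)) ≤ driveReaction s r p n := by
  have hpp : 0 ≤ p * (1 - p) := mul_nonneg hp0 (by linarith)
  have hB : (1 - 2 * s) * (p * (1 - p)) ≤ p * (1 - p) * (s * p + (1 - 2 * s)) := by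
    nlinarith [mul_nonneg hpp (mul_nonneg hs0 hp0)]
  rw [driveReaction_eq]
  nlinarith [mul_nonneg (mul_nonneg hr (sub_nonneg.2 hn)) (hB.trans' (by nlinarith))]

theorem sq_mul_le_driveReaction (hs : s ≤ 1 / 2) (hr : 0 ≤ r) (hn : n ≤ 1)
    (hp0 : 0 ≤ p) (hp1 : p ≤ 1) : p ^ 2 * (1 - p) / 2 ≤ driveReaction s r p n := by
  have hpp : 0 ≤ p * (1 - p) := mul_nonneg hp0 (by linarith)
  -- `s p + (1 - 2 s) - p / 2 = (1 - 2 s) (1 - p / 2)`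
  have hB : p ^ 2 * (1 - p) / 2 ≤ p * (1 - p) * (s * p + (1 - 2 * s)) := by
    nlinarith [mul_nonneg hpp
      (mul_nonneg (by linarith : 0 ≤ 1 - 2 * s) (by linarith : 0 ≤ 1 - p / 2))]
  rw [driveReaction_eq]
  nlinarith [mul_nonneg (mul_nonneg hr (sub_nonneg.2 hn)) (hB.trans' (by positivity))]

theorem driveReaction_nonneg (hs : s ≤ 1 / 2) (hr : 0 ≤ r) (hn : n ≤ 1) (hp0 : 0 ≤ p)
    (hp1 : p ≤ 1) : 0 ≤ driveReaction s r p n :=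
  (sq_mul_le_driveReaction hs hr hn hp0 hp1).trans'
    (div_nonneg (mul_nonneg (sq_nonneg p) (sub_nonneg.2 hp1)) zero_le_two)

end driveReaction

noncomputable def driveFlux (P N : ℝ → ℝ) (x : ℝ) : ℝ := N x ^ 2 * deriv P x

structure GeneDriveWave (s r c : ℝ) (P N : ℝ → ℝ) : Prop where
  s_nonneg : 0 ≤ s
  s_le_half : s ≤ 1 / 2
  r_pos : 0 < r
  contDiff_P : ContDiff ℝ 2 P
  contDiff_N : ContDiff ℝ 2 N
  N_pos : ∀ x, 0 < N x
  bddAbove_P : BddAbove (range P)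
  P_nonneg : ∀ x, 0 ≤ P x
  strictMono_P : StrictMono P
  strictAnti_N : StrictAnti N
  tendsto_P_atBot : Tendsto P atBot (𝓝 0)
  tendsto_N_atBot : Tendsto N atBot (𝓝 1)
  eq_P : ∀ x, -deriv (deriv P) x - c * deriv P x - 2 * (deriv N x / N x) * deriv P x
    = driveReaction s r (P x) (N x)
  eq_N : ∀ x, -deriv (deriv N) x - c * deriv N x
    = N x * ((1 - s + s * (1 - P x) ^ 2) * (r * (1 - N x) + 1) - 1)

namespace GeneDriveWave

variable {s r c : ℝ} {P N : ℝ → ℝ}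

theorem differentiable_P (w : GeneDriveWave s r c P N) : Differentiable ℝ P :=
  w.contDiff_P.differentiable (by norm_num)

theorem differentiable_N (w : GeneDriveWave s r c P N) : Differentiable ℝ N :=
  w.contDiff_N.differentiable (by norm_num)

theorem P_pos (w : GeneDriveWave s r c P N) (x : ℝ) : 0 < P x :=
  (w.P_nonneg (x - 1)).trans_lt (w.strictMono_P (sub_one_lt x))

theorem N_lt_one (w : GeneDriveWave s r c P N) (x : ℝ) : N x < 1 :=
  (w.strictAnti_N (sub_one_lt x)).trans_le
    (w.strictAnti_N.antitone.ge_of_tendsto w.tendsto_N_atBot _)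

theorem deriv_P_nonneg (w : GeneDriveWave s r c P N) (x : ℝ) : 0 ≤ deriv P x :=
  w.strictMono_P.monotone.deriv_nonneg

theorem hasDerivAt_driveFlux (w : GeneDriveWave s r c P N) (x : ℝ) :
    HasDerivAt (driveFlux P N)
      (-(c * driveFlux P N x) - N x ^ 2 * driveReaction s r (P x) (N x)) x := by
  have hN := (w.N_pos x).ne'
  have heq := w.eq_P x
  field_simp at heq
  refine (((w.differentiable_N x).hasDerivAt.fun_pow 2).fun_mul
    (w.contDiff_P.differentiable_deriv_two x).hasDerivAt).congr_deriv ?_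
  simp only [driveFlux]
  push_cast
  linear_combination (-N x) * heq

theorem differentiable_driveFlux (w : GeneDriveWave s r c P N) :
    Differentiable ℝ (driveFlux P N) :=
  fun x => (w.hasDerivAt_driveFlux x).differentiableAt

theorem driveFlux_nonneg (w : GeneDriveWave s r c P N) (x : ℝ) : 0 ≤ driveFlux P N x :=
  mul_nonneg (sq_nonneg _) (w.deriv_P_nonneg x)

theorem driveFlux_le_deriv_P (w : GeneDriveWave s r c P N) (x : ℝ) :
    driveFlux P N x ≤ deriv P x := by
  have hN2 : N x ^ 2 ≤ 1 := by nlinarith [w.N_pos x, w.N_lt_one x]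
  exact mul_le_of_le_one_left (w.deriv_P_nonneg x) hN2

theorem exists_driveFlux_pos (w : GeneDriveWave s r c P N) {a b : ℝ} (hab : a < b) :
    ∃ ξ ∈ Ioo a b, 0 < driveFlux P N ξ := by
  obtain ⟨ξ, hξ, hslope⟩ := exists_deriv_eq_slope P hab w.differentiable_P.continuous.continuousOn
    w.differentiable_P.differentiableOn
  refine ⟨ξ, hξ, mul_pos (pow_pos (w.N_pos ξ) 2) ?_⟩
  rw [hslope]
  exact div_pos (sub_pos.2 (w.strictMono_P hab)) (sub_pos.2 hab)

theorem speed_neg (w : GeneDriveWave s r c P N) : c < 0 := by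
  by_contra! hc
  obtain ⟨a, ha⟩ := eventually_atBot.mp (w.tendsto_P_atBot.eventually_lt_const one_pos)
  obtain ⟨ξ, hξ, hQξ⟩ := w.exists_driveFlux_pos (sub_one_lt a)
  have hanti : AntitoneOn (driveFlux P N) (Iic ξ) :=
    antitoneOn_of_deriv_nonpos (convex_Iic ξ) w.differentiable_driveFlux.continuous.continuousOn
      w.differentiable_driveFlux.differentiableOn fun x hx => by
        have hxa : x ≤ a := (interior_subset hx : x ∈ Iic ξ).trans hξ.2.le
        have hF := driveReaction_nonneg w.s_le_half w.r_pos.le (w.N_lt_one x).le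
          (w.P_nonneg x) (ha x hxa).le
        rw [(w.hasDerivAt_driveFlux x).deriv]
        linarith [mul_nonneg hc (w.driveFlux_nonneg x), mul_nonneg (sq_nonneg (N x)) hF]
  have hgrowth : Tendsto P atBot atBot :=
    tendsto_atBot_of_le_deriv w.differentiable_P hQξ fun x hx =>
      (hanti hx self_mem_Iic hx).trans (w.driveFlux_le_deriv_P x)
  exact not_tendsto_atBot_of_tendsto_nhds w.tendsto_P_atBot hgrowth

theorem P_le_one (w : GeneDriveWave s r c P N) (x : ℝ) : P x ≤ 1 := by
  by_contra! hx
  obtain ⟨ξ, hξ, hQξ⟩ := w.exists_driveFlux_pos (lt_add_one x)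
  have hmono : MonotoneOn (driveFlux P N) (Ici ξ) :=
    monotoneOn_of_deriv_nonneg (convex_Ici ξ) w.differentiable_driveFlux.continuous.continuousOn
      w.differentiable_driveFlux.differentiableOn fun y hy => by
        have hxy : x ≤ y := hξ.1.le.trans (interior_subset hy : y ∈ Ici ξ)
        have hF := driveReaction_nonpos w.s_nonneg w.s_le_half w.r_pos.le (w.N_lt_one y).le
          (hx.le.trans (w.strictMono_P.monotone hxy))
        rw [(w.hasDerivAt_driveFlux y).deriv]
        linarith [mul_nonpos_of_nonpos_of_nonneg w.speed_neg.le (w.driveFlux_nonneg y),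
          mul_nonpos_of_nonneg_of_nonpos (sq_nonneg (N y)) hF]
  have hgrowth : Tendsto P atTop atTop :=
    tendsto_atTop_of_le_deriv w.differentiable_P hQξ fun y hy =>
      (hmono self_mem_Ici hy hy).trans (w.driveFlux_le_deriv_P y)
  exact not_bddAbove_of_tendsto_atTop hgrowth w.bddAbove_P

theorem bddAbove_neg_deriv_div_N (w : GeneDriveWave s r c P N) :
    BddAbove (range fun x => -deriv N x / N x) := by
  set ψ := fun x => -deriv N x / N x
  have hψ : ∀ x, HasDerivAt ψ
      (ψ x ^ 2 - c * ψ x + ((1 - s + s * (1 - P x) ^ 2) * (r * (1 - N x) + 1) - 1)) x := by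
    intro x
    have hN := (w.N_pos x).ne'
    have heq := w.eq_N x
    refine ((w.contDiff_N.differentiable_deriv_two x).hasDerivAt.fun_neg.div
      (w.differentiable_N x).hasDerivAt hN).congr_deriv ?_
    simp only [ψ]
    field_simp
    linear_combination N x * heq
  refine bddAbove_of_sq_sub_le_deriv (b := c) (G := 1) (fun x => (hψ x).differentiableAt)
    fun x => ?_
  have hfactor : 0 ≤ (1 - s + s * (1 - P x) ^ 2) * (r * (1 - N x) + 1) :=
    mul_nonneg (by nlinarith [w.s_le_half, w.s_nonneg, sq_nonneg (1 - P x)])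
      (by nlinarith [w.r_pos, w.N_lt_one x])
  rw [(hψ x).deriv]
  linarith

theorem tendsto_P_atTop (w : GeneDriveWave s r c P N) : Tendsto P atTop (𝓝 1) := by
  have hP := tendsto_atTop_ciSup w.strictMono_P.monotone w.bddAbove_P
  set M := ⨆ x, P x
  have hM1 : M ≤ 1 := ciSup_le w.P_le_one
  suffices hM : 1 ≤ M by rwa [le_antisymm hM1 hM] at hP
  by_contra! hM
  obtain ⟨K, hK⟩ := w.bddAbove_neg_deriv_div_N
  have hψK : ∀ x, -deriv N x / N x ≤ K := fun x => hK ⟨x, rfl⟩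
  have hψ0 : ∀ x, 0 ≤ -deriv N x / N x := fun x =>
    div_nonneg (neg_nonneg.2 w.strictAnti_N.antitone.deriv_nonpos) (w.N_pos x).le
  have hβ : 0 < P 0 ^ 2 * (1 - M) / 2 := by
    have := w.P_pos 0
    have : 0 < 1 - M := by linarith
    positivity
  have hKc : 0 < 2 * K - c := by linarith [hψK 0, hψ0 0, w.speed_neg]
  have hsecond : ∀ x, 0 ≤ x →
      deriv (deriv P) x ≤ (2 * K - c) * deriv P x - P 0 ^ 2 * (1 - M) / 2 := by
    intro x hx
    have hP0 : P 0 ≤ P x := w.strictMono_P.monotone hx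
    have hF := sq_mul_le_driveReaction w.s_le_half w.r_pos.le (w.N_lt_one x).le
      (w.P_nonneg x) (w.P_le_one x)
    have hPM : P x ≤ M := le_ciSup w.bddAbove_P x
    have hβF : P 0 ^ 2 * (1 - M) / 2 ≤ P x ^ 2 * (1 - P x) / 2 := by
      have := w.P_nonneg 0
      gcongr ?_ ^ 2 * (1 - ?_) / 2
    have hP'' : deriv (deriv P) x
        = (2 * (-deriv N x / N x) - c) * deriv P x - driveReaction s r (P x) (N x) := by
      linear_combination -w.eq_P x
    have hcoef : (2 * (-deriv N x / N x) - c) * deriv P x ≤ (2 * K - c) * deriv P x :=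
      mul_le_mul_of_nonneg_right (by linarith [hψK x]) (w.deriv_P_nonneg x)
    linarith
  have hslope := fun x (hx : 0 ≤ x) => lt_of_deriv_le_mul_sub w.contDiff_P.differentiable_deriv_two
    hKc hβ (fun y _ => w.deriv_P_nonneg y) hsecond hx
  exact not_tendsto_nhds_of_tendsto_atTop
    (tendsto_atTop_of_le_deriv w.differentiable_P (by positivity) fun x hx => (hslope x hx).le) _ hP

theorem eventually_mul_le_sq_mul_driveReaction (w : GeneDriveWave s r c P N) {A : ℝ}
    (hA : A < 1 - 2 * s) :
    ∀ᶠ x in atBot, A * P x ≤ N x ^ 2 * driveReaction s r (P x) (N x) := by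
  have hlim : Tendsto (fun x => N x ^ 2 * (1 - 2 * s) * (1 - P x)) atBot (𝓝 (1 - 2 * s)) := by
    simpa using ((w.tendsto_N_atBot.pow 2).mul_const (1 - 2 * s)).mul
      ((tendsto_const_nhds (x := (1 : ℝ))).sub w.tendsto_P_atBot)
  filter_upwards [hlim.eventually_const_lt hA] with x hx
  have hF := mul_le_driveReaction w.s_nonneg w.s_le_half w.r_pos.le (w.N_lt_one x).le
    (w.P_nonneg x) (w.P_le_one x)
  calc A * P x ≤ N x ^ 2 * (1 - 2 * s) * (1 - P x) * P x :=
        mul_le_mul_of_nonneg_right hx.le (w.P_nonneg x)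
    _ = N x ^ 2 * ((1 - 2 * s) * (P x * (1 - P x))) := by ring
    _ ≤ N x ^ 2 * driveReaction s r (P x) (N x) := mul_le_mul_of_nonneg_left hF (sq_nonneg _)

theorem deriv_driveFlux_div_P_le (w : GeneDriveWave s r c P N) {A x : ℝ}
    (hA : A * P x ≤ N x ^ 2 * driveReaction s r (P x) (N x)) :
    deriv (fun y => driveFlux P N y / P y) x
      ≤ -(c * (driveFlux P N x / P x)) - A - (driveFlux P N x / P x) ^ 2 := by
  have hP := w.P_pos x
  have hQ := w.driveFlux_nonneg x
  have hQQ : driveFlux P N x ^ 2 ≤ driveFlux P N x * deriv P x := by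
    nlinarith [w.driveFlux_le_deriv_P x]
  rw [((w.hasDerivAt_driveFlux x).fun_div (w.differentiable_P x).hasDerivAt hP.ne').deriv]
  have hrhs : -(c * (driveFlux P N x / P x)) - A - (driveFlux P N x / P x) ^ 2
      = (-(c * driveFlux P N x * P x) - A * P x * P x - driveFlux P N x ^ 2) / P x ^ 2 := by
    field_simp
  rw [hrhs]
  gcongr
  nlinarith

theorem speed_le (w : GeneDriveWave s r c P N) : c ≤ -2 * √(1 - 2 * s) := by
  by_contra! hc
  have hs : 0 ≤ 1 - 2 * s := by linarith [w.s_le_half]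
  have hc2 : c ^ 2 / 4 < 1 - 2 * s := by
    have := Real.sq_sqrt hs
    nlinarith [w.speed_neg, Real.sqrt_nonneg (1 - 2 * s)]
  set A := (c ^ 2 / 4 + (1 - 2 * s)) / 2
  set k := A - c ^ 2 / 4
  have hk : 0 < k := by simp only [k, A]; linarith
  obtain ⟨a, ha⟩ := eventually_atBot.mp
    (w.eventually_mul_le_sq_mul_driveReaction (show A < 1 - 2 * s by simp only [A]; linarith))
  set φ := fun y => driveFlux P N y / P y + c / 2
  have hφ : Differentiable ℝ φ := fun y =>
    ((w.differentiable_driveFlux y).div (w.differentiable_P y) (w.P_pos y).ne').add_const _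
  refine not_forall_deriv_le_neg_mul_sq_add_one (a := a) hφ (lt_min one_pos hk) fun x hx => ?_
  have hRiccati := w.deriv_driveFlux_div_P_le (ha x hx)
  have hderiv : deriv φ x = deriv (fun y => driveFlux P N y / P y) x := deriv_add_const _
  have hsq : -(c * (driveFlux P N x / P x)) - A - (driveFlux P N x / P x) ^ 2
      = -(φ x ^ 2 + k) := by
    simp only [φ, k]
    ring
  have hmin : min 1 k * (φ x ^ 2 + 1) ≤ φ x ^ 2 + k := by
    nlinarith [mul_nonneg (sub_nonneg.2 (min_le_left 1 k)) (sq_nonneg (φ x)), min_le_right 1 k]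
  linarith

end GeneDriveWave

theorem stmt12_general
    (s r c : ℝ) (hs0 : 0 ≤ s) (hs : s ≤ 1 / 2) (hr : 0 < r)
    (P N : ℝ → ℝ)
    (hP2 : ContDiff ℝ 2 P) (hN2 : ContDiff ℝ 2 N)
    (hNpos : ∀ x, 0 < N x)
    (hPbd : Bornology.IsBounded (Set.range P))
    (hPnn : ∀ x, 0 ≤ P x)
    (hPmono : StrictMono P) (hNanti : StrictAnti N)
    (hPlim : Filter.Tendsto P Filter.atBot (nhds 0))
    (hNlim : Filter.Tendsto N Filter.atBot (nhds 1))
    (heqP : ∀ x, -deriv (deriv P) x - c * deriv P x - 2 * (deriv N x / N x) * deriv P x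
      = (r * (1 - N x) + 1) * P x * (1 - P x) * (s * P x - (2 * s - 1)))
    (heqN : ∀ x, -deriv (deriv N) x - c * deriv N x
      = N x * ((1 - s + s * (1 - P x) ^ 2) * (r * (1 - N x) + 1) - 1)) :
    Filter.Tendsto P Filter.atTop (nhds 1) ∧ c < 0 ∧ c ≤ -2 * Real.sqrt (1 - 2 * s) := by
  have w : GeneDriveWave s r c P N :=
    ⟨hs0, hs, hr, hP2, hN2, hNpos, hPbd.bddAbove, hPnn, hPmono, hNanti, hPlim, hNlim, heqP, heqN⟩
  exact ⟨w.tendsto_P_atTop, w.speed_neg, w.speed_le⟩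

/-- For `s ∈ [0, 1/2]`, a nontrivial traveling wave of the gene-drive
frequency system with strictly increasing `P` converging exponentially fast to `0`
at `-∞` satisfies: `P → 1` at `+∞`, `c < 0`, and `c ≤ -2√(1-2s)`. -/
theorem stmt12
    (s r c : ℝ) (hs0 : 0 ≤ s) (hs : s ≤ 1 / 2) (hr : 0 < r)
    (P N : ℝ → ℝ)
    (hP2 : ContDiff ℝ 2 P) (hN2 : ContDiff ℝ 2 N)
    (hNpos : ∀ x, 0 < N x)
    (hPbd : Bornology.IsBounded (Set.range P))
    (hNbd : Bornology.IsBounded (Set.range N))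
    (hPnn : ∀ x, 0 ≤ P x)
    (hPmono : StrictMono P) (hNanti : StrictAnti N)
    (hPlim : Filter.Tendsto P Filter.atBot (nhds 0))
    (hNlim : Filter.Tendsto N Filter.atBot (nhds 1))
    (heqP : ∀ x, -deriv (deriv P) x - c * deriv P x - 2 * (deriv N x / N x) * deriv P x
      = (r * (1 - N x) + 1) * P x * (1 - P x) * (s * P x - (2 * s - 1)))
    (heqN : ∀ x, -deriv (deriv N) x - c * deriv N x
      = N x * ((1 - s + s * (1 - P x) ^ 2) * (r * (1 - N x) + 1) - 1))
    (hnontriv : ∃ x, P x ≠ 0)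
    (hexp : ∃ lam > (0 : ℝ), ∃ C > (0 : ℝ), ∀ x ≤ (0 : ℝ), P x ≤ C * Real.exp (lam * x)) :
    Filter.Tendsto P Filter.atTop (nhds 1) ∧ c < 0 ∧ c ≤ -2 * Real.sqrt (1 - 2 * s) :=
  stmt12_general s r c hs0 hs hr P N hP2 hN2 hNpos hPbd hPnn hPmono hNanti hPlim hNlim heqP heqN
end
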